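/- arXiv:1410.3426 — 2 statements merged into one kernel-verified Lean document; each statement's English description precedes it below -/
import Mathlib

section
/- Let Δ > 0 and c > 0 with Φ(r) = (1 + r/c + r²/(3c²))e^{-r/c}. If c > (2√2 + √10)·Δ/(3·e^{(√5+1)/2}), then Δ·Φ'(r) > -1/√2 for all r ≥ 0. -/
private lemma matern_key_bound (t : ℝ) (ht : 0 ≤ t) :
    t + t^2 ≤ (2 + Real.sqrt 5) * Real.exp (t - (Real.sqrt 5 + 1)/2) := by
  have hs5 : (0:ℝ) ≤ Real.sqrt 5 := Real.sqrt_nonneg 5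
  have h5 : Real.sqrt 5 ^ 2 = 5 := Real.sq_sqrt (by norm_num)
  have hs5lt : Real.sqrt 5 < 3 := by nlinarith [h5, hs5]
  rcases le_or_gt t ((Real.sqrt 5 + 1)/2) with hcase | hcase
  · -- small t : use exp(-x) ≥ (1 - x/3)³ with x = (√5+1)/2 - t
    have hx0 : 0 ≤ (Real.sqrt 5 + 1)/2 - t := by linarith
    have hx3 : (Real.sqrt 5 + 1)/2 - t ≤ 3 := by linarith
    have hlin : 0 ≤ 9*(Real.sqrt 5 - 1) - (2 + Real.sqrt 5)*((Real.sqrt 5 + 1)/2 - t) := by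
      nlinarith [h5, hs5, hx0, hx3]
    have h13 : (0:ℝ) ≤ 1 - ((Real.sqrt 5 + 1)/2 - t)/3 := by linarith
    have he : 1 - ((Real.sqrt 5 + 1)/2 - t)/3
        ≤ Real.exp (-(((Real.sqrt 5 + 1)/2 - t)/3)) := by
      have := Real.add_one_le_exp (-(((Real.sqrt 5 + 1)/2 - t)/3)); linarith
    have hcube : (1 - ((Real.sqrt 5 + 1)/2 - t)/3)^3
        ≤ Real.exp (-(((Real.sqrt 5 + 1)/2 - t)/3))^3 :=
      pow_le_pow_left₀ h13 he 3
    have hexp3 : Real.exp (-(((Real.sqrt 5 + 1)/2 - t)/3))^3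
        = Real.exp (t - (Real.sqrt 5 + 1)/2) := by
      have : Real.exp (-(((Real.sqrt 5 + 1)/2 - t)/3))
            * Real.exp (-(((Real.sqrt 5 + 1)/2 - t)/3))
            * Real.exp (-(((Real.sqrt 5 + 1)/2 - t)/3))
          = Real.exp (t - (Real.sqrt 5 + 1)/2) := by
        rw [← Real.exp_add, ← Real.exp_add]; ring_nf
      rw [← this]; ring
    have hq : 0 ≤ ((Real.sqrt 5 + 1)/2 - t)^2
        * (9*(Real.sqrt 5 - 1) - (2 + Real.sqrt 5)*((Real.sqrt 5 + 1)/2 - t)) :=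
      mul_nonneg (sq_nonneg _) hlin
    have E : (2 + Real.sqrt 5) * (1 - ((Real.sqrt 5 + 1)/2 - t)/3)^3 - (t + t^2)
        = ((Real.sqrt 5 + 1)/2 - t)^2
          * (9*(Real.sqrt 5 - 1) - (2 + Real.sqrt 5)*((Real.sqrt 5 + 1)/2 - t)) / 27 := by
      linear_combination (-(1:ℝ)/4) * h5
    have hpoly : t + t^2 ≤ (2 + Real.sqrt 5) * (1 - ((Real.sqrt 5 + 1)/2 - t)/3)^3 := by
      linarith
    calc t + t^2 ≤ (2 + Real.sqrt 5) * (1 - ((Real.sqrt 5 + 1)/2 - t)/3)^3 := hpoly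
      _ ≤ (2 + Real.sqrt 5) * Real.exp (-(((Real.sqrt 5 + 1)/2 - t)/3))^3 :=
          mul_le_mul_of_nonneg_left hcube (by linarith)
      _ = (2 + Real.sqrt 5) * Real.exp (t - (Real.sqrt 5 + 1)/2) := by rw [hexp3]
  · -- large t : use exp u ≥ (1 + u/2)² with u = t - φ
    have hu0 : 0 ≤ t - (Real.sqrt 5 + 1)/2 := by linarith
    have he : 1 + (t - (Real.sqrt 5 + 1)/2)/2 ≤ Real.exp ((t - (Real.sqrt 5 + 1)/2)/2) := by
      have := Real.add_one_le_exp ((t - (Real.sqrt 5 + 1)/2)/2); linarith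
    have hsq : (1 + (t - (Real.sqrt 5 + 1)/2)/2)^2
        ≤ Real.exp ((t - (Real.sqrt 5 + 1)/2)/2)^2 :=
      pow_le_pow_left₀ (by linarith) he 2
    have hexp2 : Real.exp ((t - (Real.sqrt 5 + 1)/2)/2)^2
        = Real.exp (t - (Real.sqrt 5 + 1)/2) := by
      rw [sq, ← Real.exp_add]; ring_nf
    have hpoly : t + t^2 ≤ (2 + Real.sqrt 5) * (1 + (t - (Real.sqrt 5 + 1)/2)/2)^2 := by
      nlinarith [h5, hs5, sq_nonneg (t - (Real.sqrt 5 + 1)/2)]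
    calc t + t^2 ≤ (2 + Real.sqrt 5) * (1 + (t - (Real.sqrt 5 + 1)/2)/2)^2 := hpoly
      _ ≤ (2 + Real.sqrt 5) * Real.exp ((t - (Real.sqrt 5 + 1)/2)/2)^2 :=
          mul_le_mul_of_nonneg_left hsq (by linarith)
      _ = (2 + Real.sqrt 5) * Real.exp (t - (Real.sqrt 5 + 1)/2) := by rw [hexp2]

/-- One-landmark topology preservation for Matérn M₅/₂:
if c > (2√2 + √10)·Δ/(3·e^{(√5+1)/2}) then Δ·Φ'(r) > -1/√2 for all r ≥ 0,
where Φ'(r) = -((r/(3c²)) + (r²/(3c³)))·exp(-r/c). -/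
theorem matern_five_half_topology (c Δ : ℝ) (hc : 0 < c) (hΔ : 0 < Δ)
    (h : c > (2 * Real.sqrt 2 + Real.sqrt 10) * Δ / (3 * Real.exp ((Real.sqrt 5 + 1)/2))) :
    ∀ r : ℝ, 0 ≤ r →
      Δ * (-((r/(3*c^2)) + (r^2/(3*c^3))) * Real.exp (-r/c)) > -(1 / Real.sqrt 2) := by
  intro r hr
  have hs2 : (0:ℝ) < Real.sqrt 2 := Real.sqrt_pos.mpr (by norm_num)
  have hs5 : (0:ℝ) ≤ Real.sqrt 5 := Real.sqrt_nonneg 5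
  have h5 : Real.sqrt 5 ^ 2 = 5 := Real.sq_sqrt (by norm_num)
  have h2 : Real.sqrt 2 ^ 2 = 2 := Real.sq_sqrt (by norm_num)
  have hEφ : (0:ℝ) < Real.exp ((Real.sqrt 5 + 1)/2) := Real.exp_pos _
  have hinvpos : (0:ℝ) < (Real.exp ((Real.sqrt 5 + 1)/2))⁻¹ := by positivity
  have hinv : Real.exp ((Real.sqrt 5 + 1)/2) * (Real.exp ((Real.sqrt 5 + 1)/2))⁻¹ = 1 :=
    mul_inv_cancel₀ (ne_of_gt hEφ)
  have h10 : Real.sqrt 10 = Real.sqrt 2 * Real.sqrt 5 := by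
    rw [← Real.sqrt_mul (by norm_num : (0:ℝ) ≤ 2)]; norm_num
  have hc3 : Real.sqrt 2 * (2 + Real.sqrt 5) * Δ
      < 3 * c * Real.exp ((Real.sqrt 5 + 1)/2) := by
    rw [gt_iff_lt, div_lt_iff₀ (by positivity)] at h
    nlinarith [h]
  have ht0 : 0 ≤ r / c := by positivity
  have key := matern_key_bound (r / c) ht0
  have hA : r/(3*c^2) + r^2/(3*c^3) = (r/c + (r/c)^2) / (3*c) := by
    field_simp
  have hB : -r/c = -(r/c) := by ring
  rw [hA, hB]
  have hexpt : (0:ℝ) < Real.exp (-(r/c)) := Real.exp_pos _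
  have hexp : Real.exp (r/c - (Real.sqrt 5 + 1)/2) * Real.exp (-(r/c))
      = (Real.exp ((Real.sqrt 5 + 1)/2))⁻¹ := by
    rw [← Real.exp_add, ← Real.exp_neg]; ring_nf
  have hm : (r/c + (r/c)^2) * Real.exp (-(r/c))
      ≤ (2 + Real.sqrt 5) * (Real.exp ((Real.sqrt 5 + 1)/2))⁻¹ := by
    calc (r/c + (r/c)^2) * Real.exp (-(r/c))
        ≤ (2 + Real.sqrt 5) * Real.exp (r/c - (Real.sqrt 5 + 1)/2) * Real.exp (-(r/c)) :=
          mul_le_mul_of_nonneg_right key hexpt.le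
      _ = (2 + Real.sqrt 5) * (Real.exp (r/c - (Real.sqrt 5 + 1)/2) * Real.exp (-(r/c))) := by
          ring
      _ = (2 + Real.sqrt 5) * (Real.exp ((Real.sqrt 5 + 1)/2))⁻¹ := by rw [hexp]
  have step1 : Δ * ((r/c + (r/c)^2) / (3*c) * Real.exp (-(r/c)))
      ≤ Δ / (3*c) * ((2 + Real.sqrt 5) * (Real.exp ((Real.sqrt 5 + 1)/2))⁻¹) := by
    have hco : (0:ℝ) ≤ Δ / (3*c) := by positivity
    calc Δ * ((r/c + (r/c)^2) / (3*c) * Real.exp (-(r/c)))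
        = Δ / (3*c) * ((r/c + (r/c)^2) * Real.exp (-(r/c))) := by ring
      _ ≤ Δ / (3*c) * ((2 + Real.sqrt 5) * (Real.exp ((Real.sqrt 5 + 1)/2))⁻¹) :=
          mul_le_mul_of_nonneg_left hm hco
  have final : Δ / (3*c) * ((2 + Real.sqrt 5) * (Real.exp ((Real.sqrt 5 + 1)/2))⁻¹)
      < 1 / Real.sqrt 2 := by
    rw [div_mul_eq_mul_div, div_lt_div_iff₀ (by positivity) hs2]
    have hmul := mul_lt_mul_of_pos_right hc3 hinvpos
    nlinarith [hmul, hinv]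
  have hbound : Δ * ((r/c + (r/c)^2) / (3*c) * Real.exp (-(r/c))) < 1 / Real.sqrt 2 :=
    lt_of_le_of_lt step1 final
  have hrw : Δ * (-((r/c + (r/c)^2) / (3*c)) * Real.exp (-(r/c)))
      = -(Δ * ((r/c + (r/c)^2) / (3*c) * Real.exp (-(r/c)))) := by ring
  rw [hrw]
  exact neg_lt_neg hbound
end

section
/- Let Δ > 0 and σ > 0 with Gaussian Φ(r) = e^{-r²/σ²}. If σ > 2Δ/√e, then Δ·Φ'(r) > -1/√2 for all r ≥ 0. -/
/-!
The function `t ↦ t e^{-t²}` attains its maximum `1/√(2e)` at `t = 1/√2`; this follows from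
`e^{t² - 1/2} ≥ t² + 1/2 ≥ √2 t`. Rescaling `t = r/σ` gives `|Φ'(r)| ≤ √2 / (σ √e)`, and the
hypothesis `σ > 2Δ/√e` is exactly what makes `Δ √2 / (σ √e) < 1/√2`.
-/

open Real

theorem mul_exp_neg_sq_le (t : ℝ) : t * exp (-t ^ 2) ≤ 1 / (√2 * √(exp 1)) := by
  have hsqrt_exp : √(exp 1) = exp (1 / 2) := by rw [← exp_half]
  have h_am_gm : √2 * t ≤ t ^ 2 + 1 / 2 := by
    nlinarith [sq_nonneg (t - √2 / 2), sq_sqrt (zero_le_two : (0 : ℝ) ≤ 2)]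
  have h_exp : t ^ 2 + 1 / 2 ≤ exp (t ^ 2) / exp (1 / 2) := by
    rw [← exp_sub]; linarith [add_one_le_exp (t ^ 2 - 1 / 2)]
  rw [hsqrt_exp, le_div_iff₀ (by positivity)]
  calc t * exp (-t ^ 2) * (√2 * exp (1 / 2))
      = (√2 * t) * exp (1 / 2) * exp (-t ^ 2) := by ring
    _ ≤ exp (t ^ 2) / exp (1 / 2) * exp (1 / 2) * exp (-t ^ 2) := by gcongr; linarith
    _ = 1 := by field_simp; rw [← exp_add]; simp

theorem mul_exp_neg_sq_div_sq_le {σ : ℝ} (hσ : 0 < σ) (r : ℝ) :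
    r * exp (-r ^ 2 / σ ^ 2) ≤ σ / (√2 * √(exp 1)) := by
  calc r * exp (-r ^ 2 / σ ^ 2) = σ * (r / σ * exp (-(r / σ) ^ 2)) := by
        rw [div_pow, neg_div]; field_simp
    _ ≤ σ * (1 / (√2 * √(exp 1))) := by gcongr; exact mul_exp_neg_sq_le (r / σ)
    _ = σ / (√2 * √(exp 1)) := by ring

/-- One-landmark topology preservation for the Gaussian:
if σ > 2Δ/√e then Δ·Φ'(r) > -1/√2 for all r ≥ 0, where
Φ'(r) = -(2r/σ²)·exp(-r²/σ²). -/
theorem gaussian_topology (σ Δ : ℝ) (hσ : 0 < σ) (hΔ : 0 < Δ)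
    (h : σ > 2 * Δ / Real.sqrt (Real.exp 1)) :
    ∀ r : ℝ, 0 ≤ r →
      Δ * (-(2*r/σ^2) * Real.exp (-r^2/σ^2)) > -(1 / Real.sqrt 2) := by
  intro r _
  have hmax := mul_exp_neg_sq_div_sq_le hσ r
  have hsqrt2 : (0 : ℝ) < √2 := by positivity
  have hsqrt_e : (0 : ℝ) < √(exp 1) := by positivity
  have hΔσ : 2 * Δ < σ * √(exp 1) := by rwa [gt_iff_lt, div_lt_iff₀ hsqrt_e] at h
  have hbound : 2 * Δ / σ ^ 2 * (σ / (√2 * √(exp 1))) < 1 / √2 := by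
    have hrw : 2 * Δ / σ ^ 2 * (σ / (√2 * √(exp 1))) = 2 * Δ / (σ * √(exp 1)) / √2 := by
      field_simp
    rw [hrw]
    exact div_lt_div_of_pos_right ((div_lt_one (by positivity)).mpr hΔσ) hsqrt2
  calc -(1 / √2) < -(2 * Δ / σ ^ 2 * (σ / (√2 * √(exp 1)))) := neg_lt_neg hbound
    _ ≤ -(2 * Δ / σ ^ 2 * (r * exp (-r ^ 2 / σ ^ 2))) :=
        neg_le_neg (mul_le_mul_of_nonneg_left hmax (by positivity))
    _ = Δ * (-(2 * r / σ ^ 2) * exp (-r ^ 2 / σ ^ 2)) := by ring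
end
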